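/- arXiv:2211.11606 — 7 statements merged into one kernel-verified Lean document; each statement's English description precedes it below -/
import Mathlib

section
/- Let λ ∈ ℂ \ {0} and let X ∈ M(2n, ℂ) be the block diagonal matrix J(λ, n) ⊕ J(-λ, n), where J(μ, n) denotes the n×n Jordan block with eigenvalue μ. Then there exists an involution g ∈ GL(2n, ℂ) such that g X g⁻¹ = -X. -/
/-- The `n × n` Jordan block with eigenvalue `μ`. -/
def jordanBlock (n : ℕ) (μ : ℂ) : Matrix (Fin n) (Fin n) ℂ :=
  fun i j => if j = i then μ else if (j : ℕ) = (i : ℕ) + 1 then 1 else 0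

noncomputable def signDiag (n : ℕ) : Matrix (Fin n) (Fin n) ℂ :=
  Matrix.diagonal (fun i => (-1 : ℂ) ^ (i : ℕ))

lemma signDiag_sq (n : ℕ) : signDiag n * signDiag n = 1 := by
  simp [signDiag, Matrix.diagonal_mul_diagonal, ← pow_add, ← two_mul, pow_mul]

lemma signDiag_conj (n : ℕ) (μ : ℂ) :
    signDiag n * jordanBlock n μ * signDiag n = -(jordanBlock n (-μ)) := by
  ext i j
  simp only [signDiag]
  rw [Matrix.mul_diagonal, Matrix.diagonal_mul]
  simp only [jordanBlock, Matrix.neg_apply]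
  split_ifs with h1 h2
  · subst h1
    rw [mul_comm, ← mul_assoc, ← pow_add, ← two_mul, pow_mul]
    simp
  · rw [h2, pow_succ]
    ring_nf
    rw [mul_comm (i:ℕ) 2, pow_mul]
    norm_num
  · simp

/-- `J(λ,n) ⊕ J(-λ,n)` is conjugate to its negative by an involution. -/
theorem stmt3 (n : ℕ) (lam : ℂ) (hlam : lam ≠ 0) :
    let X : Matrix (Fin n ⊕ Fin n) (Fin n ⊕ Fin n) ℂ :=
      Matrix.fromBlocks (jordanBlock n lam) 0 0 (jordanBlock n (-lam))
    ∃ g : Matrix (Fin n ⊕ Fin n) (Fin n ⊕ Fin n) ℂ,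
      g * g = 1 ∧ g * X * g⁻¹ = -X := by
  intro X
  have hDD : signDiag n * signDiag n = 1 := signDiag_sq n
  have hg : Matrix.fromBlocks 0 (signDiag n) (signDiag n) 0 *
      Matrix.fromBlocks 0 (signDiag n) (signDiag n) 0 = 1 := by
    rw [Matrix.fromBlocks_multiply]
    simp [hDD, ← Matrix.fromBlocks_one]
  refine ⟨Matrix.fromBlocks 0 (signDiag n) (signDiag n) 0, hg, ?_⟩
  · set D := signDiag n with hD
    rw [Matrix.inv_eq_right_inv hg]
    show Matrix.fromBlocks 0 D D 0 * X * Matrix.fromBlocks 0 D D 0 = -X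
    simp only [X, Matrix.fromBlocks_multiply]
    have h1 : D * jordanBlock n (-lam) * D = -(jordanBlock n lam) := by
      simpa using signDiag_conj n (-lam)
    have h2 : D * jordanBlock n lam * D = -(jordanBlock n (-lam)) := signDiag_conj n lam
    simp [Matrix.fromBlocks_multiply, mul_assoc, h1, h2, ← Matrix.fromBlocks_neg]
    rw [Matrix.fromBlocks_neg]
    simp
end

section
/- The unipotent Jordan block J(1, n) is strongly reversible in GL(n, ℂ); that is, there exists an involution g ∈ GL(n, ℂ) with g J(1,n) g⁻¹ = J(1,n)⁻¹. -/
open Finset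

/-- Key orthogonality identity for the signed Pascal matrix. -/
private lemma key_pascal (n i j : ℕ) (hj : j < n) :
    ∑ k ∈ range n, ((-1 : ℤ)^k * (j.choose k) * (k.choose i))
      = if i = j then (-1 : ℤ)^i else 0 := by
  have h1 : ∑ k ∈ range n, ((-1 : ℤ)^k * (j.choose k) * (k.choose i))
      = ∑ k ∈ range (j+1), ((-1 : ℤ)^k * (j.choose k) * (k.choose i)) := by
    refine (Finset.sum_subset (Finset.range_subset_range.2 (by omega)) ?_).symm
    intro k hk hk'
    simp only [mem_range] at hk hk'
    have : j.choose k = 0 := Nat.choose_eq_zero_of_lt (by omega)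
    simp [this]
  rw [h1]
  rcases le_or_gt i j with hij | hij
  · have h2 : ∑ k ∈ range (j+1), ((-1 : ℤ)^k * (j.choose k) * (k.choose i))
        = ∑ k ∈ Ico i (j+1), ((-1 : ℤ)^k * (j.choose k) * (k.choose i)) := by
      rw [Finset.range_eq_Ico, ← Finset.sum_Ico_consecutive _ (Nat.zero_le i) (by omega)]
      have : ∑ k ∈ Ico 0 i, ((-1 : ℤ)^k * (j.choose k) * (k.choose i)) = 0 := by
        apply Finset.sum_eq_zero
        intro k hk
        simp only [mem_Ico] at hk
        have : k.choose i = 0 := Nat.choose_eq_zero_of_lt (by omega)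
        simp [this]
      rw [this, zero_add]
    rw [h2, Finset.sum_Ico_eq_sum_range, show j + 1 - i = j - i + 1 from by omega]
    have h4 : ∀ t ∈ range (j - i + 1),
        ((-1 : ℤ)^(i + t) * (j.choose (i+t)) * ((i+t).choose i))
        = (-1 : ℤ)^i * (j.choose i) * ((-1 : ℤ)^t * ((j-i).choose t)) := by
      intro t ht
      simp only [mem_range] at ht
      have := Nat.choose_mul (n := j) (k := i + t) (s := i) (by omega)
      rw [Nat.add_sub_cancel_left] at this
      have h5 : ((j.choose (i+t) : ℤ) * ((i+t).choose i)) = (j.choose i : ℤ) * ((j-i).choose t) := by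
        exact_mod_cast congrArg (Nat.cast (R := ℤ)) this
      linear_combination ((-1 : ℤ)^(i+t)) * h5
    rw [Finset.sum_congr rfl h4, ← Finset.mul_sum, Int.alternating_sum_range_choose]
    rcases eq_or_ne i j with h | h
    · simp [h, Nat.sub_self]
    · have : j - i ≠ 0 := by omega
      simp [this, h]
  · rw [if_neg (by omega)]
    apply Finset.sum_eq_zero
    intro k hk
    simp only [mem_range] at hk
    have : k.choose i = 0 := Nat.choose_eq_zero_of_lt (by omega)
    simp [this]

private lemma key_pascalC (n i j : ℕ) (hj : j < n) :
    ∑ k ∈ range n, ((-1 : ℂ)^k * (j.choose k) * (k.choose i))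
      = if i = j then (-1 : ℂ)^i else 0 := by
  have h := key_pascal n i j hj
  have h2 : ((∑ k ∈ range n, ((-1:ℤ)^k * (j.choose k) * (k.choose i)) : ℤ) : ℂ)
      = if i = j then (-1:ℂ)^i else 0 := by
    rw [h]; split <;> simp
  rw [← h2]
  push_cast
  rfl

/-- The unipotent Jordan block `J(1,n)` is strongly reversible in `GL(n,ℂ)`. -/
theorem stmt5 (n : ℕ) :
    ∃ g : Matrix (Fin n) (Fin n) ℂ,
      g * g = 1 ∧ g * jordanBlock n 1 * g⁻¹ = (jordanBlock n 1)⁻¹ := by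
  set J : Matrix (Fin n) (Fin n) ℂ := jordanBlock n 1 with hJ
  set g : Matrix (Fin n) (Fin n) ℂ :=
    fun i j => (-1 : ℂ)^(j : ℕ) * ((j : ℕ).choose (i : ℕ)) with hg
  set h : Matrix (Fin n) (Fin n) ℂ :=
    fun i j => (-1 : ℂ)^(j : ℕ) * (((j : ℕ)+1).choose ((i : ℕ)+1)) with hh
  have hgg : g * g = 1 := by
    ext i j
    rw [Matrix.mul_apply, Matrix.one_apply]
    have e1 : ∑ k : Fin n, g i k * g k j
        = (-1 : ℂ)^(j:ℕ) * ∑ k ∈ range n, ((-1 : ℂ)^k * ((j:ℕ).choose k) * (k.choose (i:ℕ))) := by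
      rw [Finset.mul_sum, ← Fin.sum_univ_eq_sum_range]
      apply Finset.sum_congr rfl
      intro k _
      simp only [hg]
      ring
    rw [e1, key_pascalC n (i:ℕ) (j:ℕ) j.isLt]
    rcases eq_or_ne i j with hij | hij
    · subst hij
      simp [← mul_pow]
    · rw [if_neg (fun hc => hij (Fin.ext hc)), if_neg hij, mul_zero]
  have hhh : h * h = 1 := by
    ext i j
    rw [Matrix.mul_apply, Matrix.one_apply]
    have e1 : ∑ k : Fin n, h i k * h k j
        = (-1 : ℂ)^(j:ℕ) * ∑ k ∈ range n,
            ((-1 : ℂ)^k * (((j:ℕ)+1).choose (k+1)) * ((k+1).choose ((i:ℕ)+1))) := by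
      rw [Finset.mul_sum, ← Fin.sum_univ_eq_sum_range]
      apply Finset.sum_congr rfl
      intro k _
      simp only [hh]
      ring
    have e2 : ∑ k ∈ range n,
          ((-1 : ℂ)^k * (((j:ℕ)+1).choose (k+1)) * ((k+1).choose ((i:ℕ)+1)))
        = -(if (i:ℕ)+1 = (j:ℕ)+1 then (-1 : ℂ)^((i:ℕ)+1) else 0) := by
      have := key_pascalC (n+1) ((i:ℕ)+1) ((j:ℕ)+1) (by omega)
      rw [Finset.sum_range_succ'] at this
      have h0 : ((-1 : ℂ)^(0:ℕ) * (((j:ℕ)+1).choose 0) * ((0:ℕ).choose ((i:ℕ)+1))) = 0 := by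
        simp [Nat.choose_eq_zero_of_lt (Nat.succ_pos _)]
      rw [h0, add_zero] at this
      rw [← this]
      rw [← Finset.sum_neg_distrib]
      apply Finset.sum_congr rfl
      intro k _
      ring
    rw [e1, e2]
    rcases eq_or_ne i j with hij | hij
    · subst hij
      simp [pow_succ, ← mul_pow]
    · rw [if_neg (show ¬((i:ℕ)+1 = (j:ℕ)+1) from fun hc => hij (Fin.ext (by omega))),
        if_neg hij]
      simp
  have hJg : J * g = h := by
    ext i j
    rw [Matrix.mul_apply]
    have split : ∀ k : Fin n, J i k * g k j
        = (if k = i then g i j else 0) + (if (k:ℕ) = (i:ℕ)+1 then g k j else 0) := by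
      intro k
      rcases eq_or_ne k i with hk | hk
      · subst hk
        have : ¬((k:ℕ) = (k:ℕ)+1) := by omega
        simp [hJ, jordanBlock, this]
      · rcases eq_or_ne ((k:ℕ)) ((i:ℕ)+1) with hk2 | hk2
        · simp [hJ, jordanBlock, hk, hk2]
        · simp [hJ, jordanBlock, hk, hk2]
    rw [Finset.sum_congr rfl (fun k _ => split k), Finset.sum_add_distrib,
      Finset.sum_ite_eq' Finset.univ i (fun _ => g i j), if_pos (Finset.mem_univ i)]
    rcases lt_or_ge ((i:ℕ)+1) n with hin | hin
    · have e3 : ∑ k : Fin n, (if (k:ℕ) = (i:ℕ)+1 then g k j else 0)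
          = g ⟨(i:ℕ)+1, hin⟩ j := by
        rw [show (∑ k : Fin n, (if (k:ℕ) = (i:ℕ)+1 then g k j else 0))
            = ∑ k : Fin n, (if k = (⟨(i:ℕ)+1, hin⟩ : Fin n) then g k j else 0) from
          Finset.sum_congr rfl (fun k _ => by
            congr 1
            simp [Fin.ext_iff])]
        rw [Finset.sum_ite_eq' Finset.univ _ (fun k => g k j), if_pos (Finset.mem_univ _)]
      rw [e3]
      show (-1:ℂ)^(j:ℕ) * ((j:ℕ).choose (i:ℕ)) + (-1:ℂ)^(j:ℕ) * ((j:ℕ).choose ((i:ℕ)+1))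
          = (-1:ℂ)^(j:ℕ) * (((j:ℕ)+1).choose ((i:ℕ)+1))
      rw [Nat.choose_succ_succ]
      push_cast
      ring
    · have e3 : ∑ k : Fin n, (if (k:ℕ) = (i:ℕ)+1 then g k j else 0) = 0 := by
        apply Finset.sum_eq_zero
        intro k _
        have : ¬((k:ℕ) = (i:ℕ)+1) := by omega
        simp [this]
      rw [e3, add_zero]
      show (-1:ℂ)^(j:ℕ) * ((j:ℕ).choose (i:ℕ))
          = (-1:ℂ)^(j:ℕ) * (((j:ℕ)+1).choose ((i:ℕ)+1))
      have hi : (i:ℕ) = n - 1 := by omega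
      rcases eq_or_ne ((j:ℕ)) ((i:ℕ)) with hji | hji
      · rw [hji, Nat.choose_self, Nat.choose_self]
      · have hj1 : (j:ℕ) < (i:ℕ) := by omega
        rw [Nat.choose_eq_zero_of_lt hj1, Nat.choose_eq_zero_of_lt (by omega)]
  have hJgJg : J * (g * J * g) = 1 := by
    calc J * (g * J * g) = (J * g) * (J * g) := by
          rw [← Matrix.mul_assoc, ← Matrix.mul_assoc, Matrix.mul_assoc (J * g)]
      _ = h * h := by rw [hJg]
      _ = 1 := hhh
  have hinv : J⁻¹ = g * J * g := Matrix.inv_eq_right_inv hJgJg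
  have hginv : g⁻¹ = g := Matrix.inv_eq_right_inv hgg
  exact ⟨g, hgg, by rw [hginv, hinv]⟩
end

section
/- Let λ ∈ ℂ \ {0, 1, -1} and let A = J(λ, n) ⊕ J(λ⁻¹, n) ∈ GL(2n, ℂ). Then A is strongly reversible in GL(2n, ℂ): there exists an involution g ∈ GL(2n, ℂ) with g A g⁻¹ = A⁻¹. -/
namespace Stmt7Aux

/-- The nilpotent upper shift matrix. -/
def Nmat (n : ℕ) : Matrix (Fin n) (Fin n) ℂ :=
  fun i j => if (j : ℕ) = (i : ℕ) + 1 then 1 else 0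

/-- Explicit inverse of `J(λ⁻¹, n)`, namely `λ(1+λN)⁻¹`. -/
def Lmat (n : ℕ) (lam : ℂ) : Matrix (Fin n) (Fin n) ℂ :=
  fun i j => if (i : ℕ) ≤ (j : ℕ) then (-1)^((j:ℕ)-(i:ℕ)) * lam^((j:ℕ)-(i:ℕ)+1) else 0

/-- The strictly upper part of `Lmat`. -/
def Mmat (n : ℕ) (lam : ℂ) : Matrix (Fin n) (Fin n) ℂ :=
  fun i j => if (i : ℕ) < (j : ℕ) then (-1)^((j:ℕ)-(i:ℕ)) * lam^((j:ℕ)-(i:ℕ)+1) else 0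

lemma jordan_eq (n : ℕ) (μ : ℂ) :
    jordanBlock n μ = μ • (1 : Matrix (Fin n) (Fin n) ℂ) + Nmat n := by
  ext i j
  simp only [jordanBlock, Nmat, Matrix.add_apply, Matrix.smul_apply, Matrix.one_apply,
    smul_eq_mul]
  by_cases h : j = i
  · subst h
    simp
  · have h' : ¬ (i = j) := fun e => h e.symm
    simp [h, h']

lemma Lmat_eq (n : ℕ) (lam : ℂ) :
    Lmat n lam = lam • (1 : Matrix (Fin n) (Fin n) ℂ) + Mmat n lam := by
  ext i j
  simp only [Lmat, Mmat, Matrix.add_apply, Matrix.smul_apply, Matrix.one_apply, smul_eq_mul]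
  rcases lt_trichotomy ((i:ℕ)) ((j:ℕ)) with h | h | h
  · have hij : ¬ (i = j) := by intro e; subst e; omega
    rw [if_pos (le_of_lt h), if_neg hij, if_pos h]
    ring
  · have hij : i = j := Fin.ext h
    subst hij
    simp
  · have hij : ¬ (i = j) := by intro e; subst e; omega
    rw [if_neg (by omega), if_neg hij, if_neg (by omega)]
    ring

lemma Nmat_mul (n : ℕ) (B : Matrix (Fin n) (Fin n) ℂ) (i j : Fin n) :
    (Nmat n * B) i j = if h : (i:ℕ) + 1 < n then B ⟨(i:ℕ)+1, h⟩ j else 0 := by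
  rw [Matrix.mul_apply]
  split_ifs with h
  · rw [Finset.sum_eq_single (⟨(i:ℕ)+1, h⟩ : Fin n)]
    · simp [Nmat]
    · intro k _ hk
      have hk' : ¬ ((k:ℕ) = (i:ℕ) + 1) := by
        intro e; exact hk (Fin.ext e)
      simp [Nmat, hk']
    · simp
  · apply Finset.sum_eq_zero
    intro k _
    have hk' : ¬ ((k:ℕ) = (i:ℕ) + 1) := by
      have := k.isLt; omega
    simp [Nmat, hk']

lemma mul_Nmat (n : ℕ) (B : Matrix (Fin n) (Fin n) ℂ) (i j : Fin n) :
    (B * Nmat n) i j =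
      if _ : (j:ℕ) ≠ 0 then B i ⟨(j:ℕ)-1, lt_of_le_of_lt (Nat.sub_le _ _) j.isLt⟩ else 0 := by
  rw [Matrix.mul_apply]
  split_ifs with h
  · rw [Finset.sum_eq_single (⟨(j:ℕ)-1, lt_of_le_of_lt (Nat.sub_le _ _) j.isLt⟩ : Fin n)]
    · have hsub : ((j:ℕ)-1) + 1 = (j:ℕ) := by omega
      simp [Nmat, hsub]
    · intro k _ hk
      have hkv : (k:ℕ) ≠ (j:ℕ) - 1 := fun e => hk (Fin.ext e)
      have hk' : ¬ ((j:ℕ) = (k:ℕ) + 1) := by omega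
      simp [Nmat, hk']
    · simp
  · apply Finset.sum_eq_zero
    intro k _
    have hk' : ¬ ((j:ℕ) = (k:ℕ) + 1) := by omega
    simp [Nmat, hk']

lemma K_mul_L (n : ℕ) (lam : ℂ) (h0 : lam ≠ 0) :
    (lam⁻¹ • (1 : Matrix (Fin n) (Fin n) ℂ) + Nmat n) * Lmat n lam = 1 := by
  ext i j
  rw [Matrix.add_mul, Matrix.smul_mul, Matrix.one_mul, Matrix.add_apply, Matrix.smul_apply,
    Nmat_mul, smul_eq_mul]
  rcases lt_trichotomy ((i:ℕ)) ((j:ℕ)) with h | h | h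
  · have h1 : (i:ℕ) + 1 < n := lt_of_le_of_lt h j.isLt
    rw [dif_pos h1]
    obtain ⟨m, hm⟩ : ∃ m, (j:ℕ) = (i:ℕ) + m + 1 := ⟨(j:ℕ) - (i:ℕ) - 1, by omega⟩
    have e1 : (j:ℕ) - (i:ℕ) = m + 1 := by omega
    have e2 : (j:ℕ) - ((i:ℕ)+1) = m := by omega
    rw [Matrix.one_apply_ne (by intro e; subst e; omega)]
    simp only [Lmat, Fin.val_mk, if_pos (le_of_lt h)]
    rw [if_pos (show (i:ℕ)+1 ≤ (j:ℕ) by omega)]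
    simp only [e1, e2]
    field_simp
    ring
  · have hij : i = j := Fin.ext h
    subst hij
    rw [Matrix.one_apply_eq]
    have hL : Lmat n lam i i = lam := by simp [Lmat]
    rw [hL]
    have hz : (if h : (i:ℕ) + 1 < n then Lmat n lam ⟨(i:ℕ)+1, h⟩ i else 0) = 0 := by
      split_ifs with h1
      · simp [Lmat]
      · rfl
    rw [hz, inv_mul_cancel₀ h0, add_zero]
  · rw [Matrix.one_apply_ne (by intro e; subst e; omega)]
    have hL : Lmat n lam i j = 0 := by simp [Lmat]; omega
    have hz : (if h : (i:ℕ) + 1 < n then Lmat n lam ⟨(i:ℕ)+1, h⟩ j else 0) = 0 := by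
      split_ifs with h1
      · simp [Lmat]; omega
      · rfl
    rw [hL, hz, mul_zero, add_zero]

lemma L_mul_K (n : ℕ) (lam : ℂ) (h0 : lam ≠ 0) :
    Lmat n lam * (lam⁻¹ • (1 : Matrix (Fin n) (Fin n) ℂ) + Nmat n) = 1 := by
  ext i j
  rw [Matrix.mul_add, Matrix.mul_smul, Matrix.mul_one, Matrix.add_apply, Matrix.smul_apply,
    mul_Nmat, smul_eq_mul]
  rcases lt_trichotomy ((i:ℕ)) ((j:ℕ)) with h | h | h
  · have hj : (j:ℕ) ≠ 0 := by omega
    rw [dif_pos hj]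
    obtain ⟨m, hm⟩ : ∃ m, (j:ℕ) = (i:ℕ) + m + 1 := ⟨(j:ℕ) - (i:ℕ) - 1, by omega⟩
    have e1 : (j:ℕ) - (i:ℕ) = m + 1 := by omega
    rw [Matrix.one_apply_ne (by intro e; subst e; omega)]
    simp only [Lmat]
    rw [if_pos (le_of_lt h), if_pos (show (i:ℕ) ≤ ((j:ℕ)-1) by omega)]
    have e2 : ((j:ℕ)-1) - (i:ℕ) = m := by omega
    simp only [e1, e2]
    field_simp
    ring
  · have hij : i = j := Fin.ext h
    subst hij
    rw [Matrix.one_apply_eq]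
    have hL : Lmat n lam i i = lam := by simp [Lmat]
    rw [hL, inv_mul_cancel₀ h0]
    have hz : (if _ : (i:ℕ) ≠ 0 then
        Lmat n lam i ⟨(i:ℕ)-1, lt_of_le_of_lt (Nat.sub_le _ _) i.isLt⟩ else 0) = 0 := by
      split_ifs with h1
      · simp [Lmat]; omega
      · rfl
    rw [hz, add_zero]
  · rw [Matrix.one_apply_ne (by intro e; subst e; omega)]
    have hL : Lmat n lam i j = 0 := by simp [Lmat]; omega
    have hz : (if _ : (j:ℕ) ≠ 0 then
        Lmat n lam i ⟨(j:ℕ)-1, lt_of_le_of_lt (Nat.sub_le _ _) j.isLt⟩ else 0) = 0 := by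
      split_ifs with h1
      · simp [Lmat]; omega
      · rfl
    rw [hL, hz, mul_zero, add_zero]

lemma Mmat_pow_lt (n : ℕ) (lam : ℂ) :
    ∀ m (i j : Fin n), (j:ℕ) < (i:ℕ) + m → (Mmat n lam ^ m) i j = 0 := by
  intro m
  induction m with
  | zero =>
    intro i j hij
    rw [pow_zero, Matrix.one_apply_ne]
    intro e; subst e; omega
  | succ m ih =>
    intro i j hij
    rw [pow_succ', Matrix.mul_apply]
    apply Finset.sum_eq_zero
    intro k _
    by_cases hk : (i:ℕ) < (k:ℕ)
    · rw [ih k j (by omega), mul_zero]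
    · have : Mmat n lam i k = 0 := by simp [Mmat]; omega
      rw [this, zero_mul]

lemma Mmat_pow_diag (n : ℕ) (lam : ℂ) :
    ∀ m (i j : Fin n), (j:ℕ) = (i:ℕ) + m → (Mmat n lam ^ m) i j = (-lam^2)^m := by
  intro m
  induction m with
  | zero =>
    intro i j hij
    have : i = j := Fin.ext (by omega)
    subst this
    simp
  | succ m ih =>
    intro i j hij
    have h1 : (i:ℕ) + 1 < n := by have := j.isLt; omega
    rw [pow_succ', Matrix.mul_apply]
    rw [Finset.sum_eq_single (⟨(i:ℕ)+1, h1⟩ : Fin n)]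
    · have hM : Mmat n lam i ⟨(i:ℕ)+1, h1⟩ = -lam^2 := by
        simp [Mmat]
        try ring
      rw [hM, ih _ j (by simp; omega), pow_succ]
      ring
    · intro k _ hk
      have hkv : (k:ℕ) ≠ (i:ℕ) + 1 := fun e => hk (Fin.ext e)
      by_cases hik : (i:ℕ) < (k:ℕ)
      · have hk2 : (i:ℕ) + 1 < (k:ℕ) := by omega
        rw [Mmat_pow_lt n lam m k j (by omega), mul_zero]
      · have : Mmat n lam i k = 0 := by simp [Mmat]; omega
        rw [this, zero_mul]
    · simp

end Stmt7Aux

open Stmt7Aux in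
/-- For `λ ∉ {0, 1, -1}`, the matrix `J(λ,n) ⊕ J(λ⁻¹,n)` is strongly
reversible in `GL(2n,ℂ)`. -/
theorem stmt7 (n : ℕ) (lam : ℂ) (h0 : lam ≠ 0) (h1 : lam ≠ 1) (h2 : lam ≠ -1) :
    let A : Matrix (Fin n ⊕ Fin n) (Fin n ⊕ Fin n) ℂ :=
      Matrix.fromBlocks (jordanBlock n lam) 0 0 (jordanBlock n lam⁻¹)
    ∃ g : Matrix (Fin n ⊕ Fin n) (Fin n ⊕ Fin n) ℂ,
      g * g = 1 ∧ g * A * g⁻¹ = A⁻¹ := by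
  intro A
  rcases Nat.eq_zero_or_pos n with hn | hn
  · subst hn
    refine ⟨1, ?_, ?_⟩ <;>
    · ext i j
      rcases i with a | a <;> exact a.elim0
  · -- main case
    set J : Matrix (Fin n) (Fin n) ℂ := jordanBlock n lam with hJ
    set K : Matrix (Fin n) (Fin n) ℂ := jordanBlock n lam⁻¹ with hK
    have hKform : K = lam⁻¹ • (1 : Matrix (Fin n) (Fin n) ℂ) + Nmat n := by
      rw [hK, jordan_eq]
    have hJform : J = lam • (1 : Matrix (Fin n) (Fin n) ℂ) + Nmat n := by
      rw [hJ, jordan_eq]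
    have hKL : K * Lmat n lam = 1 := by rw [hKform]; exact K_mul_L n lam h0
    have hLK : Lmat n lam * K = 1 := by rw [hKform]; exact L_mul_K n lam h0
    -- the conjugating matrix T
    set lst : Fin n := ⟨n - 1, by omega⟩ with hlst
    set M : Matrix (Fin n) (Fin n) ℂ := Mmat n lam with hM
    set T : Matrix (Fin n) (Fin n) ℂ := fun i j => (M ^ (n - 1 - (j:ℕ))) i lst with hT
    -- T is upper triangular with explicit nonzero diagonal
    have hTlow : ∀ i j : Fin n, (j:ℕ) < (i:ℕ) → T i j = 0 := by
      intro i j hij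
      exact Mmat_pow_lt n lam _ i lst (by simp [hlst]; omega)
    have hTdiag : ∀ i : Fin n, T i i = (-lam^2)^(n - 1 - (i:ℕ)) := by
      intro i
      exact Mmat_pow_diag n lam _ i lst (by simp [hlst]; omega)
    have hdet : IsUnit T.det := by
      have htri : T.BlockTriangular id := by
        intro i j hij
        exact hTlow i j hij
      rw [Matrix.det_of_upperTriangular htri]
      rw [isUnit_iff_ne_zero]
      apply Finset.prod_ne_zero_iff.mpr
      intro i _
      rw [hTdiag i]
      exact pow_ne_zero _ (by simpa using pow_ne_zero 2 h0)
    have hTinv : T⁻¹ * T = 1 := Matrix.nonsing_inv_mul T hdet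
    have hTinv' : T * T⁻¹ = 1 := Matrix.mul_nonsing_inv T hdet
    -- the key intertwining relation T * N = M * T
    have hTN : T * Nmat n = M * T := by
      ext i j
      rw [mul_Nmat, Matrix.mul_apply]
      have hMT : ∑ k, M i k * T k j = (M ^ (n - 1 - (j:ℕ) + 1)) i lst := by
        rw [pow_succ', Matrix.mul_apply]
      rw [hMT]
      split_ifs with hj
      · have : n - 1 - ((j:ℕ) - 1) = n - 1 - (j:ℕ) + 1 := by
          have := j.isLt; omega
        simp only [hT]
        rw [this]
      · have hj0 : (j:ℕ) = 0 := by omega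
        rw [hj0]
        rw [Mmat_pow_lt n lam _ i lst (by simp [hlst]; omega)]
    -- hence T * J = Lmat * T
    have hTJ : T * J = Lmat n lam * T := by
      rw [hJform, Lmat_eq, Matrix.mul_add, Matrix.add_mul, Matrix.mul_smul, Matrix.smul_mul,
        Matrix.mul_one, Matrix.one_mul, hTN]
    -- define the involution
    refine ⟨Matrix.fromBlocks 0 T⁻¹ T 0, ?_, ?_⟩
    · rw [Matrix.fromBlocks_multiply]
      simp [hTinv, hTinv', Matrix.fromBlocks_one]
    · have hgg : (Matrix.fromBlocks 0 T⁻¹ T 0 : Matrix (Fin n ⊕ Fin n) (Fin n ⊕ Fin n) ℂ) *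
          Matrix.fromBlocks 0 T⁻¹ T 0 = 1 := by
        rw [Matrix.fromBlocks_multiply]
        simp [hTinv, hTinv', Matrix.fromBlocks_one]
      have hginv : (Matrix.fromBlocks 0 T⁻¹ T 0 : Matrix (Fin n ⊕ Fin n) (Fin n ⊕ Fin n) ℂ)⁻¹ =
          Matrix.fromBlocks 0 T⁻¹ T 0 := Matrix.inv_eq_right_inv hgg
      rw [hginv]
      symm
      apply Matrix.inv_eq_left_inv
      have hA : A = Matrix.fromBlocks J 0 0 K := rfl
      rw [hA, Matrix.fromBlocks_multiply, Matrix.fromBlocks_multiply, Matrix.fromBlocks_multiply]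
      have e1 : T⁻¹ * K * T * J = 1 := by
        rw [Matrix.mul_assoc, Matrix.mul_assoc, hTJ, ← Matrix.mul_assoc K, hKL,
          Matrix.one_mul, hTinv]
      have e2 : T * J * T⁻¹ * K = 1 := by
        rw [hTJ, Matrix.mul_assoc (Lmat n lam) T T⁻¹, hTinv', Matrix.mul_one, hLK]
      simp only [Matrix.mul_zero, Matrix.zero_mul, Matrix.mul_one, Matrix.one_mul,
        add_zero, zero_add]
      rw [e1, e2, Matrix.fromBlocks_one]
end

section
/- Let N = J(0, n) ∈ M(n, ℝ) be the nilpotent Jordan block and x ∈ ℝⁿ arbitrary. Then there exists an involution (B, w) ∈ Aff(n, ℝ) with B N B⁻¹ = -N, B² = I, (B + I) w = 0, and N w = -(B + I) x. -/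
/-- For the nilpotent Jordan block `N = J(0,n)` and any `x ∈ ℝⁿ`, there is an
affine involution `(B, w)` with `B N B⁻¹ = -N`, `B² = I`, `(B + I) w = 0` and
`N w = -(B + I) x`. -/
theorem stmt14 (n : ℕ) (x : Fin n → ℝ) :
    let N : Matrix (Fin n) (Fin n) ℝ := fun i j => if (j : ℕ) = (i : ℕ) + 1 then 1 else 0
    ∃ (B : Matrix (Fin n) (Fin n) ℝ) (w : Fin n → ℝ),
      B * N * B⁻¹ = -N ∧ B * B = 1 ∧ (B + 1).mulVec w = 0 ∧
        N.mulVec w = -((B + 1).mulVec x) := by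
  intro N
  set d : Fin n → ℝ := fun i => (-1 : ℝ) ^ (n + (i : ℕ)) with hd
  refine ⟨Matrix.diagonal d,
    fun j => if h : (j : ℕ) = 0 then 0
      else -(((-1 : ℝ) ^ (n + (j : ℕ) - 1)) + 1) * x ⟨(j : ℕ) - 1, by omega⟩, ?_, ?_, ?_, ?_⟩
  · -- B N B⁻¹ = -N
    have hBB : Matrix.diagonal d * Matrix.diagonal d = 1 := by
      rw [Matrix.diagonal_mul_diagonal]
      ext i j
      simp [Matrix.diagonal, Matrix.one_apply, hd, ← mul_pow]
    rw [Matrix.inv_eq_right_inv hBB]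
    ext i j
    simp only [Matrix.diagonal_mul, Matrix.mul_diagonal, Matrix.neg_apply]
    simp only [N]
    by_cases h : (j : ℕ) = (i : ℕ) + 1
    · simp only [h, if_pos rfl, hd, if_true, mul_one]
      rw [show n + ((i : ℕ) + 1) = (n + (i : ℕ)) + 1 from rfl, pow_succ, ← mul_assoc,
        ← mul_pow]
      norm_num
    · simp [h]
  · -- B * B = 1
    rw [Matrix.diagonal_mul_diagonal]
    ext i j
    simp [Matrix.diagonal, Matrix.one_apply, hd, ← mul_pow]
  · -- (B+1) w = 0
    funext i
    have h1 : (1 : Matrix (Fin n) (Fin n) ℝ) = Matrix.diagonal (fun _ => (1:ℝ)) := by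
      simp
    rw [h1, Matrix.diagonal_add, Matrix.mulVec_diagonal]
    by_cases hi0 : (i : ℕ) = 0
    · simp [hi0]
    · rcases Nat.even_or_odd (n + (i : ℕ)) with he | ho
      · have : (-1 : ℝ) ^ (n + (i : ℕ) - 1) = -1 := by
          apply Odd.neg_one_pow
          rcases he with ⟨k, hk⟩
          exact ⟨k - 1, by omega⟩
        simp [hi0, hd, this]
      · have : d i = -1 := Odd.neg_one_pow ho
        simp [this, hd] at *
        rw [this]
        simp
  · -- N w = -((B+1) x)
    funext i
    have h1 : (1 : Matrix (Fin n) (Fin n) ℝ) = Matrix.diagonal (fun _ => (1:ℝ)) := by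
      simp
    rw [h1, Matrix.diagonal_add]
    have hrhs : (-(Matrix.diagonal (fun i => d i + (1:ℝ))).mulVec x) i
        = -((d i + 1) * x i) := by
      simp [Matrix.mulVec_diagonal]
    rw [hrhs]
    show (N.mulVec _) i = _
    rw [Matrix.mulVec, dotProduct]
    by_cases h : (i : ℕ) + 1 < n
    · rw [Finset.sum_eq_single (⟨(i : ℕ) + 1, h⟩ : Fin n)]
      · simp only [N, if_true, one_mul]
        rw [dif_neg (by omega : ¬((i : ℕ) + 1 = 0))]
        have h2 : (⟨(i : ℕ) + 1 - 1, by omega⟩ : Fin n) = i := by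
          apply Fin.ext; simp
        rw [h2]
        have h3 : n + ((i : ℕ) + 1) - 1 = n + (i : ℕ) := by omega
        rw [h3, hd]
        ring
      · intro j _ hj
        have : (j : ℕ) ≠ (i : ℕ) + 1 := by
          intro hc; apply hj; apply Fin.ext; simpa using hc
        simp [N, this]
      · intro hc; exact absurd (Finset.mem_univ _) hc
    · have hi : (i : ℕ) + 1 = n := by omega
      have hodd : Odd (n + (i : ℕ)) := ⟨(i : ℕ), by omega⟩
      have hdi : d i = -1 := Odd.neg_one_pow hodd
      rw [Finset.sum_eq_zero, hdi]
      · ring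
      · intro j _
        have hj : (j : ℕ) ≠ (i : ℕ) + 1 := by omega
        simp [N, hj]
end

section
/- Let λ ∈ ℂ, λ ≠ 0, and define Ω(λ, n) ∈ GL(n, ℂ) by: Ω is upper triangular, its entry x_{n,n} = -1, x_{i,n} = 0 for i < n, and for 1 ≤ i ≤ j ≤ n-1, x_{i,j} = -λ⁻¹ x_{i+1,j} - λ⁻² x_{i+1,j+1}. Then Ω(λ, n) · J(λ⁻¹, n) = (J(λ, n))⁻¹ · Ω(λ, n), where J(μ, n) is the n×n Jordan block with eigenvalue μ. -/
lemma sum_eq_nat (n : ℕ) (f : Fin n → ℂ) (m : ℕ) :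
    (∑ k : Fin n, if (k : ℕ) = m then f k else 0)
      = if h : m < n then f ⟨m, h⟩ else 0 := by
  split
  · next h =>
    rw [Finset.sum_eq_single ⟨m, h⟩]
    · simp
    · intro k _ hk
      exact if_neg fun hh => hk (Fin.ext hh)
    · simp
  · next h =>
    apply Finset.sum_eq_zero
    intro k _
    rw [if_neg]
    have := k.isLt
    omega

lemma left_apply (n : ℕ) (lam : ℂ) (Ω : Matrix (Fin n) (Fin n) ℂ) (i j : Fin n) :
    (jordanBlock n lam * Ω) i j
      = lam * Ω i j + (if h : (i : ℕ) + 1 < n then Ω ⟨(i : ℕ) + 1, h⟩ j else 0) := by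
  rw [Matrix.mul_apply]
  have hk : ∀ k : Fin n, jordanBlock n lam i k * Ω k j =
      (if k = i then lam * Ω i j else 0) + (if (k : ℕ) = (i : ℕ) + 1 then Ω k j else 0) := by
    intro k
    simp only [jordanBlock]
    by_cases h1 : k = i
    · subst h1
      rw [if_pos rfl, if_pos rfl, if_neg (by omega), add_zero]
    · rw [if_neg h1, if_neg h1, zero_add]
      by_cases h2 : (k : ℕ) = (i : ℕ) + 1
      · rw [if_pos h2, if_pos h2, one_mul]
      · rw [if_neg h2, if_neg h2, zero_mul]
  simp_rw [hk, Finset.sum_add_distrib, Finset.sum_ite_eq' Finset.univ i,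
    sum_eq_nat n (fun k => Ω k j) ((i : ℕ) + 1)]
  simp

lemma right_apply (n : ℕ) (mu : ℂ) (Ω : Matrix (Fin n) (Fin n) ℂ) (i j : Fin n) :
    (Ω * jordanBlock n mu) i j
      = mu * Ω i j + (if 0 < (j : ℕ) then
          Ω i ⟨(j : ℕ) - 1, lt_of_le_of_lt (Nat.sub_le _ _) j.isLt⟩ else 0) := by
  rw [Matrix.mul_apply]
  have hk : ∀ k : Fin n, Ω i k * jordanBlock n mu k j =
      (if k = j then mu * Ω i j else 0)
        + (if (k : ℕ) = (j : ℕ) - 1 ∧ 0 < (j : ℕ) then Ω i k else 0) := by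
    intro k
    simp only [jordanBlock]
    by_cases h1 : j = k
    · subst h1
      rw [if_pos rfl, if_pos rfl, if_neg (by omega), add_zero, mul_comm]
    · have h1' : ¬ k = j := fun hh => h1 hh.symm
      rw [if_neg h1, if_neg h1', zero_add]
      by_cases h2 : (j : ℕ) = (k : ℕ) + 1
      · rw [if_pos h2, if_pos (by omega), mul_one]
      · rw [if_neg h2, if_neg (by
          rintro ⟨ha, hb⟩
          omega), mul_zero]
  simp_rw [hk, Finset.sum_add_distrib, Finset.sum_ite_eq' Finset.univ j]
  by_cases hj : 0 < (j : ℕ)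
  · simp only [hj, and_true, if_pos]
    rw [sum_eq_nat n (fun k => Ω i k) ((j : ℕ) - 1),
      dif_pos (lt_of_le_of_lt (Nat.sub_le _ _) j.isLt)]
    simp
  · simp [hj]

/-- If `Ω` satisfies the defining recursion of `Ω(λ,n)` (upper triangular,
last column `(0,…,0,-1)ᵀ`, and `x_{i,j} = -λ⁻¹ x_{i+1,j} - λ⁻² x_{i+1,j+1}`),
then `Ω · J(λ⁻¹,n) = J(λ,n)⁻¹ · Ω`. -/
theorem stmt15 (n : ℕ) (lam : ℂ) (hlam : lam ≠ 0) (Ω : Matrix (Fin n) (Fin n) ℂ)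
    (hlow : ∀ i j : Fin n, (j : ℕ) < (i : ℕ) → Ω i j = 0)
    (hlastcol : ∀ i j : Fin n, (i : ℕ) + 1 < n → (j : ℕ) = n - 1 → Ω i j = 0)
    (hcorner : ∀ i j : Fin n, (i : ℕ) = n - 1 → (j : ℕ) = n - 1 → Ω i j = -1)
    (hrec : ∀ (i j : Fin n) (hi : (i : ℕ) + 1 < n) (hj : (j : ℕ) + 1 < n),
      (i : ℕ) ≤ (j : ℕ) →
        Ω i j = -lam⁻¹ * Ω ⟨(i : ℕ) + 1, hi⟩ j
          - lam⁻¹ ^ 2 * Ω ⟨(i : ℕ) + 1, hi⟩ ⟨(j : ℕ) + 1, hj⟩) :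
    Ω * jordanBlock n lam⁻¹ = (jordanBlock n lam)⁻¹ * Ω := by
  -- J(λ) is invertible
  have hbt : (jordanBlock n lam).BlockTriangular id := by
    intro i j hij
    simp only [id] at hij
    simp only [jordanBlock]
    rw [if_neg (by exact fun hh => absurd (congrArg Fin.val hh) (by omega)),
      if_neg (by omega)]
  have hdet : (jordanBlock n lam).det = lam ^ n := by
    rw [Matrix.det_of_upperTriangular hbt]
    simp [jordanBlock]
  have hu : IsUnit (jordanBlock n lam).det := by
    rw [hdet]; exact (IsUnit.pow n (Ne.isUnit hlam))
  -- key computation: J(λ) * (Ω * J(λ⁻¹)) = Ω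
  have key : jordanBlock n lam * (Ω * jordanBlock n lam⁻¹) = Ω := by
    ext i j
    rw [left_apply]; simp only [right_apply]
    by_cases hi : (i : ℕ) + 1 < n
    · rw [dif_pos hi]
      by_cases hj : 0 < (j : ℕ)
      · rw [if_pos hj, if_pos hj]
        by_cases hij : (i : ℕ) ≤ (j : ℕ) - 1
        · have hj' : ((j : ℕ) - 1) + 1 < n := by
            have := j.isLt; omega
          have hr := hrec i ⟨(j : ℕ) - 1, lt_of_le_of_lt (Nat.sub_le _ _) j.isLt⟩
            hi hj' hij
          have hjj : (⟨((⟨(j : ℕ) - 1, lt_of_le_of_lt (Nat.sub_le _ _) j.isLt⟩ : Fin n) : ℕ)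
              + 1, hj'⟩ : Fin n) = j := by
            apply Fin.ext; simp; omega
          rw [hjj] at hr
          rw [hr]
          field_simp
          ring
        · -- j ≤ i : all extra terms vanish
          have h1 : Ω i ⟨(j : ℕ) - 1, lt_of_le_of_lt (Nat.sub_le _ _) j.isLt⟩ = 0 :=
            hlow _ _ (by simp; omega)
          have h2 : Ω ⟨(i : ℕ) + 1, hi⟩ j = 0 := hlow _ _ (by simp; omega)
          have h3 : Ω ⟨(i : ℕ) + 1, hi⟩ ⟨(j : ℕ) - 1, lt_of_le_of_lt (Nat.sub_le _ _) j.isLt⟩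
              = 0 := hlow _ _ (by simp; omega)
          rw [h1, h2, h3]
          field_simp
          ring
      · rw [if_neg hj, if_neg hj]
        have h2 : Ω ⟨(i : ℕ) + 1, hi⟩ j = 0 := hlow _ j (by simp; omega)
        rw [h2]
        field_simp
        ring
    · rw [dif_neg hi]
      have hin : (i : ℕ) = n - 1 := by have := i.isLt; omega
      by_cases hj : 0 < (j : ℕ)
      · rw [if_pos hj]
        have h1 : Ω i ⟨(j : ℕ) - 1, lt_of_le_of_lt (Nat.sub_le _ _) j.isLt⟩ = 0 :=
          hlow _ _ (by simp; have := j.isLt; omega)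
        rw [h1]
        field_simp
        ring
      · rw [if_neg hj]
        field_simp
        ring
  calc Ω * jordanBlock n lam⁻¹
      = (jordanBlock n lam)⁻¹ * (jordanBlock n lam * (Ω * jordanBlock n lam⁻¹)) := by
        rw [← Matrix.mul_assoc, Matrix.nonsing_inv_mul _ hu, Matrix.one_mul]
    _ = (jordanBlock n lam)⁻¹ * Ω := by rw [key]
end

section
/- With Ω(λ, n) ∈ GL(n, ℂ) defined by the recursion x_{n,n} = -1, x_{i,n} = 0 for i<n, x_{i,j} = 0 for j<i, and x_{i,j} = -λ⁻¹ x_{i+1,j} - λ⁻² x_{i+1,j+1} for 1 ≤ i ≤ j ≤ n-1, one has the explicit formula: x_{i,i} = (-1)^{n-i+1} λ^{-2(n-i)} and x_{i,j} = (-1)^{n-i+1} C(n-i-1, j-i) λ^{-2n+i+j} for i < j < n, where C denotes a binomial coefficient. -/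
lemma keyA (lam : ℂ) (h : lam ≠ 0) (s c1 c2 : ℂ) (e : ℤ) :
    -lam⁻¹ * (s * c1 * lam ^ (e + 1)) - lam⁻¹ ^ 2 * (s * c2 * lam ^ (e + 2)) =
      -1 * s * (c1 + c2) * lam ^ e := by
  rw [zpow_add₀ h, zpow_add₀ h, zpow_one, zpow_two]
  field_simp
  ring

lemma auxΩ (n : ℕ) (lam : ℂ) (hlam : lam ≠ 0) (Ω : Matrix (Fin n) (Fin n) ℂ)
    (hlow : ∀ i j : Fin n, (j : ℕ) < (i : ℕ) → Ω i j = 0)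
    (hlastcol : ∀ i j : Fin n, (i : ℕ) + 1 < n → (j : ℕ) = n - 1 → Ω i j = 0)
    (hcorner : ∀ i j : Fin n, (i : ℕ) = n - 1 → (j : ℕ) = n - 1 → Ω i j = -1)
    (hrec : ∀ (i j : Fin n) (hi : (i : ℕ) + 1 < n) (hj : (j : ℕ) + 1 < n),
      (i : ℕ) ≤ (j : ℕ) →
        Ω i j = -lam⁻¹ * Ω ⟨(i : ℕ) + 1, hi⟩ j
          - lam⁻¹ ^ 2 * Ω ⟨(i : ℕ) + 1, hi⟩ ⟨(j : ℕ) + 1, hj⟩) :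
    ∀ k : ℕ, ∀ i j : Fin n, n - 1 - (i : ℕ) ≤ k → (i : ℕ) ≤ (j : ℕ) →
      Ω i j = (-1) ^ (n - (i : ℕ)) * ((n - (i : ℕ) - 2).choose ((j : ℕ) - (i : ℕ)) : ℂ) *
        lam ^ (((i : ℕ) + (j : ℕ) + 2 : ℤ) - 2 * n) := by
  intro k
  induction k with
  | zero =>
    intro i j hk hij
    have hin := i.isLt
    have hjn := j.isLt
    have hi : (i : ℕ) = n - 1 := by omega
    have hj : (j : ℕ) = n - 1 := by omega
    rw [hcorner i j hi hj]
    rw [show n - (i : ℕ) - 2 = 0 by omega, show (j : ℕ) - (i : ℕ) = 0 by omega,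
      show (((i : ℕ) : ℤ) + (j : ℕ) + 2 - 2 * n) = 0 by omega,
      show n - (i : ℕ) = 1 by omega]
    simp
  | succ k ih =>
    intro i j hk hij
    have hin := i.isLt
    have hjn := j.isLt
    by_cases hi : (i : ℕ) = n - 1
    · have hj : (j : ℕ) = n - 1 := by omega
      rw [hcorner i j hi hj]
      rw [show n - (i : ℕ) - 2 = 0 by omega, show (j : ℕ) - (i : ℕ) = 0 by omega,
        show (((i : ℕ) : ℤ) + (j : ℕ) + 2 - 2 * n) = 0 by omega,
        show n - (i : ℕ) = 1 by omega]
      simp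
    · have hi' : (i : ℕ) + 1 < n := by omega
      by_cases hj : (j : ℕ) = n - 1
      · rw [hlastcol i j hi' hj]
        rw [Nat.choose_eq_zero_of_lt (by omega : n - (i : ℕ) - 2 < (j : ℕ) - (i : ℕ))]
        simp
      · have hj' : (j : ℕ) + 1 < n := by omega
        have hrec' := hrec i j hi' hj' hij
        by_cases hdiag : (i : ℕ) = (j : ℕ)
        · have h0 : Ω ⟨(i : ℕ) + 1, hi'⟩ j = 0 := hlow _ _ (by simp; omega)
          have h1 := ih ⟨(i : ℕ) + 1, hi'⟩ ⟨(j : ℕ) + 1, hj'⟩ (by simp; omega) (by simp; omega)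
          simp only [Fin.val_mk] at h1
          rw [hrec', h0, h1]
          rw [show ((j : ℕ) + 1) - ((i : ℕ) + 1) = 0 by omega,
            show (j : ℕ) - (i : ℕ) = 0 by omega, Nat.choose_zero_right, Nat.choose_zero_right,
            show ((((i : ℕ) + 1 : ℕ) : ℤ) + (((j : ℕ) + 1 : ℕ) : ℤ) + 2 - 2 * n)
              = ((((i : ℕ) : ℤ) + (j : ℕ) + 2 - 2 * n) + 2) by push_cast; ring,
            show n - (i : ℕ) = (n - ((i : ℕ) + 1)) + 1 by omega, pow_succ,
            zpow_add₀ hlam, zpow_two]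
          field_simp
          ring
        · have hij' : (i : ℕ) + 1 ≤ (j : ℕ) := by omega
          have h1 := ih ⟨(i : ℕ) + 1, hi'⟩ j (by simp; omega) (by simpa using hij')
          have h2 := ih ⟨(i : ℕ) + 1, hi'⟩ ⟨(j : ℕ) + 1, hj'⟩ (by simp; omega) (by simp; omega)
          simp only [Fin.val_mk] at h1 h2
          rw [hrec', h1, h2]
          rw [show ((((i : ℕ) + 1 : ℕ) : ℤ) + ((j : ℕ) : ℤ) + 2 - 2 * n)
              = ((((i : ℕ) : ℤ) + (j : ℕ) + 2 - 2 * n) + 1) by push_cast; ring,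
            show ((((i : ℕ) + 1 : ℕ) : ℤ) + (((j : ℕ) + 1 : ℕ) : ℤ) + 2 - 2 * n)
              = ((((i : ℕ) : ℤ) + (j : ℕ) + 2 - 2 * n) + 2) by push_cast; ring,
            keyA lam hlam]
          have hpas : (n - ((i : ℕ) + 1) - 2).choose ((j : ℕ) - ((i : ℕ) + 1))
              + (n - ((i : ℕ) + 1) - 2).choose (((j : ℕ) + 1) - ((i : ℕ) + 1))
              = (n - (i : ℕ) - 2).choose ((j : ℕ) - (i : ℕ)) := by
            rw [show n - (i : ℕ) - 2 = (n - ((i : ℕ) + 1) - 2) + 1 by omega,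
              show (j : ℕ) - (i : ℕ) = ((j : ℕ) - ((i : ℕ) + 1)) + 1 by omega,
              Nat.choose_succ_succ,
              show ((j : ℕ) + 1) - ((i : ℕ) + 1) = ((j : ℕ) - ((i : ℕ) + 1)) + 1 by omega]
          rw [← hpas, show n - (i : ℕ) = (n - ((i : ℕ) + 1)) + 1 by omega, pow_succ]
          push_cast
          ring

/-- If `Ω` satisfies the defining recursion of `Ω(λ,n)`, then its entries are
given by the explicit formula `x_{i,i} = (-1)^{n-i+1} λ^{-2(n-i)}` and
`x_{i,j} = (-1)^{n-i+1} C(n-i-1, j-i) λ^{-2n+i+j}` for `i < j < n`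
(stated here with 0-based indices). -/
theorem stmt16 (n : ℕ) (lam : ℂ) (hlam : lam ≠ 0) (Ω : Matrix (Fin n) (Fin n) ℂ)
    (hlow : ∀ i j : Fin n, (j : ℕ) < (i : ℕ) → Ω i j = 0)
    (hlastcol : ∀ i j : Fin n, (i : ℕ) + 1 < n → (j : ℕ) = n - 1 → Ω i j = 0)
    (hcorner : ∀ i j : Fin n, (i : ℕ) = n - 1 → (j : ℕ) = n - 1 → Ω i j = -1)
    (hrec : ∀ (i j : Fin n) (hi : (i : ℕ) + 1 < n) (hj : (j : ℕ) + 1 < n),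
      (i : ℕ) ≤ (j : ℕ) →
        Ω i j = -lam⁻¹ * Ω ⟨(i : ℕ) + 1, hi⟩ j
          - lam⁻¹ ^ 2 * Ω ⟨(i : ℕ) + 1, hi⟩ ⟨(j : ℕ) + 1, hj⟩) :
    (∀ i : Fin n, Ω i i = (-1) ^ (n - (i : ℕ)) * lam ^ (-(2 * ((n : ℤ) - 1 - (i : ℕ))))) ∧
    (∀ i j : Fin n, (i : ℕ) < (j : ℕ) → (j : ℕ) + 1 < n →
      Ω i j = (-1) ^ (n - (i : ℕ)) * ((n - (i : ℕ) - 2).choose ((j : ℕ) - (i : ℕ)) : ℂ) *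
        lam ^ (((i : ℕ) + (j : ℕ) + 2 : ℤ) - 2 * n)) := by
  have main := auxΩ n lam hlam Ω hlow hlastcol hcorner hrec n
  constructor
  · intro i
    rw [main i i (by omega) le_rfl, Nat.sub_self, Nat.choose_zero_right,
      show ((((i : ℕ) : ℤ) + (i : ℕ) + 2 - 2 * n)) = (-(2 * ((n : ℤ) - 1 - (i : ℕ)))) by omega]
    simp
  · intro i j hij _
    exact main i j (by omega) (le_of_lt hij)
end

section
/- For λ ∈ ℂ \ {0}, the matrix Ω(λ, n) satisfies (Ω(λ, n))⁻¹ = Ω(λ⁻¹, n), i.e., Ω(λ, n) · Ω(λ⁻¹, n) = Iₙ. In particular, if λ = ±1 then Ω(λ, n) is an involution. -/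
/-- The matrix `Ω(λ,n)`, given by its explicit entrywise formula. -/
noncomputable def Omega (n : ℕ) (lam : ℂ) : Matrix (Fin n) (Fin n) ℂ :=
  fun i j =>
    if (j : ℕ) < (i : ℕ) then 0
    else if (j : ℕ) = n - 1 then (if (i : ℕ) = n - 1 then -1 else 0)
    else if (i : ℕ) = (j : ℕ) then
      (-1) ^ (n - (i : ℕ)) * lam ^ (-(2 * ((n : ℤ) - 1 - (i : ℕ))))
    else
      (-1) ^ (n - (i : ℕ)) * ((n - (i : ℕ) - 2).choose ((j : ℕ) - (i : ℕ)) : ℂ) *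
        lam ^ (((i : ℕ) + (j : ℕ) + 2 : ℤ) - 2 * n)

/-- The λ-independent core matrix entries. -/
noncomputable def bb (n i j : ℕ) : ℂ :=
  if j < i then 0 else (-1) ^ (n - i) * ((n - i - 2).choose (j - i) : ℂ)

lemma trin (N m r : ℕ) (hr : r ≤ m) :
    N.choose m * m.choose r = N.choose r * (N - r).choose (m - r) := by
  rcases le_or_gt m N with h | h
  · exact Nat.choose_mul hr
  · rw [Nat.choose_eq_zero_of_lt h, Nat.zero_mul]
    rcases le_or_gt r N with h2 | h2
    · rw [Nat.choose_eq_zero_of_lt (by omega : N - r < m - r), Nat.mul_zero]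
    · rw [Nat.choose_eq_zero_of_lt h2, Nat.zero_mul]

lemma alt_sum (m : ℕ) :
    (∑ r ∈ Finset.range (m + 1), ((-1 : ℂ)) ^ r * (m.choose r : ℂ)) =
      if m = 0 then 1 else 0 := by
  have h := Int.alternating_sum_range_choose (n := m)
  have h2 : ((∑ r ∈ Finset.range (m + 1), ((-1) ^ r * m.choose r : ℤ) : ℤ) : ℂ)
      = ((if m = 0 then 1 else 0 : ℤ) : ℂ) := by rw [h]
  push_cast at h2
  convert h2 using 2 <;> simp

lemma bb_of_lt (n i j : ℕ) (h : j < i) : bb n i j = 0 := if_pos h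

lemma bb_of_le (n i j : ℕ) (h : i ≤ j) :
    bb n i j = (-1) ^ (n - i) * ((n - i - 2).choose (j - i) : ℂ) :=
  if_neg (by omega)

lemma bb_mul_bb (n i j : ℕ) (hi : i < n) (hj : j < n) :
    ∑ k ∈ Finset.range n, bb n i k * bb n k j = if i = j then 1 else 0 := by
  rcases lt_or_ge j i with hji | hij
  · rw [if_neg (by omega)]
    refine Finset.sum_eq_zero fun k _ => ?_
    rcases lt_or_ge k i with h | h
    · rw [bb_of_lt n i k h, zero_mul]
    · rw [bb_of_lt n k j (lt_of_lt_of_le hji h), mul_zero]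
  · have hsub : ∑ k ∈ Finset.range n, bb n i k * bb n k j
        = ∑ k ∈ Finset.Icc i j, bb n i k * bb n k j := by
      refine (Finset.sum_subset ?_ ?_).symm
      · intro k hk
        simp only [Finset.mem_Icc] at hk
        simp only [Finset.mem_range]
        omega
      · intro k _ hk'
        simp only [Finset.mem_Icc, not_and_or, not_le] at hk'
        rcases hk' with h | h
        · rw [bb_of_lt n i k h, zero_mul]
        · rw [bb_of_lt n k j h, mul_zero]
    rw [hsub, ← Finset.Ico_add_one_right_eq_Icc, Finset.sum_Ico_eq_sum_range]
    have hm1 : j + 1 - i = (j - i) + 1 := by omega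
    rw [hm1]
    have hstep : ∀ r ∈ Finset.range ((j - i) + 1),
        bb n i (i + r) * bb n (i + r) j
          = ((n - i - 2).choose (j - i) : ℂ) * ((-1) ^ r * ((j - i).choose r : ℂ)) := by
      intro r hr
      simp only [Finset.mem_range] at hr
      have hr' : r ≤ j - i := by omega
      have hb1 : bb n i (i + r) = (-1) ^ (n - i) * ((n - i - 2).choose r : ℂ) := by
        rw [bb_of_le n i (i + r) (by omega)]
        have e0 : i + r - i = r := by omega
        rw [e0]
      have hb2 : bb n (i + r) j
          = (-1) ^ (n - i - r) * ((n - i - 2 - r).choose (j - i - r) : ℂ) := by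
        rw [bb_of_le n (i + r) j (by omega)]
        have e2 : n - (i + r) - 2 = n - i - 2 - r := by omega
        have e3 : j - (i + r) = j - i - r := by omega
        have e1 : n - (i + r) = n - i - r := by omega
        rw [e2, e3, e1]
      rw [hb1, hb2]
      have hsign : ((-1 : ℂ)) ^ (n - i) * (-1) ^ (n - i - r) = (-1) ^ r := by
        have h1 : n - i - r + r = n - i := by omega
        have h2 : ((-1 : ℂ) ^ (n - i - r)) ^ 2 = 1 := by
          rw [← pow_mul, mul_comm, pow_mul, neg_one_sq, one_pow]
        calc ((-1 : ℂ)) ^ (n - i) * (-1) ^ (n - i - r)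
            = ((-1 : ℂ)) ^ (n - i - r + r) * (-1) ^ (n - i - r) := by rw [h1]
          _ = ((-1 : ℂ) ^ (n - i - r)) ^ 2 * (-1) ^ r := by ring
          _ = (-1) ^ r := by rw [h2, one_mul]
      have hch : ((n - i - 2).choose r : ℂ) * ((n - i - 2 - r).choose (j - i - r) : ℂ)
          = ((n - i - 2).choose (j - i) : ℂ) * ((j - i).choose r : ℂ) := by
        exact_mod_cast congrArg (Nat.cast : ℕ → ℂ) (trin (n - i - 2) (j - i) r hr').symm
      calc (-1 : ℂ) ^ (n - i) * ((n - i - 2).choose r : ℂ)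
              * ((-1) ^ (n - i - r) * ((n - i - 2 - r).choose (j - i - r) : ℂ))
          = ((-1 : ℂ)) ^ (n - i) * (-1) ^ (n - i - r)
              * (((n - i - 2).choose r : ℂ) * ((n - i - 2 - r).choose (j - i - r))) := by
            ring
        _ = (-1 : ℂ) ^ r * (((n - i - 2).choose (j - i) : ℂ) * ((j - i).choose r : ℂ)) := by
            rw [hsign, hch]
        _ = ((n - i - 2).choose (j - i) : ℂ) * ((-1) ^ r * ((j - i).choose r : ℂ)) := by ring
    rw [Finset.sum_congr rfl hstep, ← Finset.mul_sum, alt_sum]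
    by_cases hij' : i = j
    · have hm0 : j - i = 0 := by omega
      rw [if_pos hij', hm0]
      simp
    · have hm0 : j - i ≠ 0 := by omega
      rw [if_neg hij', if_neg hm0, mul_zero]

lemma omega_apply (n : ℕ) (lam : ℂ) (hlam : lam ≠ 0) (i j : Fin n) :
    Omega n lam i j
      = lam ^ (((i : ℕ) : ℤ) + 1 - n) * bb n i j * lam ^ (((j : ℕ) : ℤ) + 1 - n) := by
  have hi := i.isLt
  have hj := j.isLt
  show (if (j : ℕ) < (i : ℕ) then 0
    else if (j : ℕ) = n - 1 then (if (i : ℕ) = n - 1 then -1 else 0)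
    else if (i : ℕ) = (j : ℕ) then
      (-1) ^ (n - (i : ℕ)) * lam ^ (-(2 * ((n : ℤ) - 1 - (i : ℕ))))
    else
      (-1) ^ (n - (i : ℕ)) * ((n - (i : ℕ) - 2).choose ((j : ℕ) - (i : ℕ)) : ℂ) *
        lam ^ (((i : ℕ) + (j : ℕ) + 2 : ℤ) - 2 * n)) = _
  rcases lt_or_ge (j : ℕ) (i : ℕ) with h | h
  · rw [if_pos h, bb_of_lt n i j h, mul_zero, zero_mul]
  · rw [if_neg (not_lt.mpr h), bb_of_le n i j h]
    by_cases hjn : (j : ℕ) = n - 1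
    · rw [if_pos hjn]
      by_cases hin : (i : ℕ) = n - 1
      · rw [if_pos hin]
        have e1 : n - (i : ℕ) = 1 := by omega
        have e2 : n - (i : ℕ) - 2 = 0 := by omega
        have e3 : (j : ℕ) - (i : ℕ) = 0 := by omega
        have e4 : (((i : ℕ) : ℤ)) + 1 - n = 0 := by omega
        have e5 : (((j : ℕ) : ℤ)) + 1 - n = 0 := by omega
        rw [e2, e3, e1, e4, e5]
        norm_num
      · rw [if_neg hin]
        have hlt : n - (i : ℕ) - 2 < (j : ℕ) - (i : ℕ) := by omega
        rw [Nat.choose_eq_zero_of_lt hlt]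
        simp
    · rw [if_neg hjn]
      by_cases hij : (i : ℕ) = (j : ℕ)
      · rw [if_pos hij]
        have e3 : (j : ℕ) - (i : ℕ) = 0 := by omega
        rw [e3, Nat.choose_zero_right]
        have he : (-(2 * ((n : ℤ) - 1 - (i : ℕ))))
            = ((((i : ℕ) : ℤ)) + 1 - n) + ((((j : ℕ) : ℤ)) + 1 - n) := by omega
        rw [he, zpow_add₀ hlam]
        push_cast
        ring
      · rw [if_neg hij]
        have he : ((((i : ℕ)) + ((j : ℕ)) + 2 : ℤ) - 2 * n)
            = ((((i : ℕ) : ℤ)) + 1 - n) + ((((j : ℕ) : ℤ)) + 1 - n) := by ring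
        rw [he, zpow_add₀ hlam]
        ring

/-- `Ω(λ,n)⁻¹ = Ω(λ⁻¹,n)`; in particular, for `λ = ±1`, `Ω(λ,n)` is an
involution. -/
theorem stmt17 (n : ℕ) (lam : ℂ) (hlam : lam ≠ 0) :
    Omega n lam * Omega n lam⁻¹ = 1 ∧
      ((lam = 1 ∨ lam = -1) → Omega n lam * Omega n lam = 1) := by
  have hmain : Omega n lam * Omega n lam⁻¹ = 1 := by
    ext i j
    rw [Matrix.mul_apply]
    have h1 : ∀ k : Fin n, Omega n lam i k * Omega n lam⁻¹ k j
        = lam ^ (((i : ℕ) : ℤ) + 1 - n) * (bb n i k * bb n k j)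
            * (lam⁻¹) ^ (((j : ℕ) : ℤ) + 1 - n) := by
      intro k
      rw [omega_apply n lam hlam, omega_apply n lam⁻¹ (inv_ne_zero hlam)]
      have hk1 : lam ^ (((k : ℕ) : ℤ) + 1 - n) * (lam⁻¹) ^ (((k : ℕ) : ℤ) + 1 - n) = 1 := by
        rw [← mul_zpow, mul_inv_cancel₀ hlam, one_zpow]
      calc (lam ^ (((i : ℕ) : ℤ) + 1 - n) * bb n i k * lam ^ (((k : ℕ) : ℤ) + 1 - n))
            * ((lam⁻¹) ^ (((k : ℕ) : ℤ) + 1 - n) * bb n k j * (lam⁻¹) ^ (((j : ℕ) : ℤ) + 1 - n))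
          = lam ^ (((i : ℕ) : ℤ) + 1 - n) * (bb n i k * bb n k j)
              * (lam⁻¹) ^ (((j : ℕ) : ℤ) + 1 - n)
              * (lam ^ (((k : ℕ) : ℤ) + 1 - n) * (lam⁻¹) ^ (((k : ℕ) : ℤ) + 1 - n)) := by ring
        _ = _ := by rw [hk1, mul_one]
    rw [Finset.sum_congr rfl (fun k _ => h1 k)]
    have h2 : ∑ k : Fin n, bb n i k * bb n k j = if (i : ℕ) = (j : ℕ) then 1 else 0 := by
      rw [Fin.sum_univ_eq_sum_range (fun k => bb n i (k : ℕ) * bb n (k : ℕ) j)]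
      exact bb_mul_bb n i j i.isLt j.isLt
    calc ∑ k : Fin n, lam ^ (((i : ℕ) : ℤ) + 1 - n) * (bb n i k * bb n k j)
            * (lam⁻¹) ^ (((j : ℕ) : ℤ) + 1 - n)
        = lam ^ (((i : ℕ) : ℤ) + 1 - n) * (∑ k : Fin n, bb n i k * bb n k j)
            * (lam⁻¹) ^ (((j : ℕ) : ℤ) + 1 - n) := by
          rw [Finset.mul_sum, Finset.sum_mul]
      _ = (1 : Matrix (Fin n) (Fin n) ℂ) i j := by
          rw [h2]
          by_cases hij : i = j
          · rw [if_pos (congrArg Fin.val hij), mul_one, hij, Matrix.one_apply_eq,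
              ← mul_zpow, mul_inv_cancel₀ hlam, one_zpow]
          · rw [if_neg (fun h => hij (Fin.ext h)), mul_zero, zero_mul,
              Matrix.one_apply_ne hij]
  refine ⟨hmain, fun h => ?_⟩
  have hinv : lam⁻¹ = lam := by rcases h with h | h <;> subst h <;> norm_num
  calc Omega n lam * Omega n lam = Omega n lam * Omega n lam⁻¹ := by rw [hinv]
    _ = 1 := hmain
end
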